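/- Let (G,X) be a strongly marked group with Property D. Let x, y ∈ X with x ≠ y, a, b nonzero exponents, and m ≥ 3 odd. If xy ≠ yx, \overline{[x^a,y^b]}_m = \overline{[y^b,x^a]}_m and lg_{S(X)}(\overline{[x^a,y^b]}_m) = m, then either x has order 2 (and a = 1) or y has order 2 (and b = 1). -/

import Mathlib

/-!
Write `s = x ^ a`, `t = y ^ b`, `m = 2k + 1` and `g = s t ⋯ s = t s ⋯ t`. By Property D the set
of letters of a reduced word depends only on the element it represents, and strong marking
forbids a nontrivial power of `x` to equal, or to merge with, a nontrivial power of `y`.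
Comparing reduced words of `s g = g t` shows that `s` and `t` are involutions; since `g` has
syllabic length `m`, the element `s t` then has order exactly `m`, so `s` and `t` satisfy no
shorter braid relation.

If neither `x` nor `y` is an involution, `x g y` has syllabic length `m`, so Property D gives an
M-operation on its word `x (t s ⋯ t s) (t y)` of length `m + 1`. A type I operation is impossible
because adjacent letters are powers of different generators. A type II block is either a shorter
braid of `s, t`, or forces `x` to commute with `t`, or `s` to commute with `t y`; each of the last
two yields a reduced word that contradicts the invariance of letters or is visibly not reduced.
-/

namespace Paper

/-- The alternating list `(a, b, a, b, ...)` of length `m`. -/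
def altList {α : Type*} (a b : α) : ℕ → List α
  | 0 => []
  | n + 1 => a :: altList b a n

/-- The alternating product `a b a ⋯` of length `m` in a monoid. -/
def altProd {G : Type*} [Monoid G] (a b : G) (m : ℕ) : G := (altList a b m).prod

variable {G : Type*} [Group G]

/-- The set of syllables of a generating set `X`: nontrivial powers of elements of `X`. -/
def Syll (X : Set G) : Set G := {s | ∃ x ∈ X, ∃ a : ℤ, s = x ^ a ∧ s ≠ 1}

/-- A syllabic word: a list all of whose entries are syllables. -/
def SylWord (X : Set G) (w : List G) : Prop := ∀ s ∈ w, s ∈ Syll X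

/-- The syllabic length of an element: minimal length of a syllabic word representing it. -/
noncomputable def sylLen (X : Set G) (g : G) : ℕ :=
  sInf {n | ∃ w : List G, SylWord X w ∧ w.prod = g ∧ w.length = n}

/-- A syllabic word is reduced if its length is the syllabic length of the element
it represents. -/
def Reduced (X : Set G) (w : List G) : Prop :=
  SylWord X w ∧ w.length = sylLen X w.prod

/-- Elementary M-operation of type I. -/
def MOpI (X : Set G) (w w' : List G) : Prop :=
  ∃ (w₁ w₂ : List G) (s t : G), s ∈ Syll X ∧ t ∈ Syll X ∧
    w = w₁ ++ [s, t] ++ w₂ ∧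
    ((s * t ∈ Syll X ∧ w' = w₁ ++ [s * t] ++ w₂) ∨ (s * t = 1 ∧ w' = w₁ ++ w₂))

/-- Elementary M-operation of type II. -/
def MOpII (X : Set G) (w w' : List G) : Prop :=
  ∃ (w₁ w₂ : List G) (s t : G) (m : ℕ), s ∈ Syll X ∧ t ∈ Syll X ∧ 2 ≤ m ∧
    altProd s t m = altProd t s m ∧ sylLen X (altProd s t m) = m ∧
    w = w₁ ++ altList s t m ++ w₂ ∧ w' = w₁ ++ altList t s m ++ w₂

/-- Elementary M-operation (of type I or type II). -/
def MOp (X : Set G) (w w' : List G) : Prop := MOpI X w w' ∨ MOpII X w w'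

/-- A syllabic word is M-reduced if its length cannot be shortened by any finite
sequence of elementary M-operations. -/
def MReduced (X : Set G) (w : List G) : Prop :=
  ∀ w', Relation.ReflTransGen (MOp X) w w' → ¬ w'.length < w.length

/-- Property D: a syllabic word is reduced iff it is M-reduced, and any two reduced
syllabic words representing the same element are connected by a finite sequence of
elementary M-operations of type II. -/
def PropertyD (X : Set G) : Prop :=
  (∀ w : List G, SylWord X w → (Reduced X w ↔ MReduced X w)) ∧
  (∀ w w' : List G, Reduced X w → Reduced X w' → w.prod = w'.prod →
    Relation.ReflTransGen (MOpII X) w w')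

/-- `(G, X)` is a marked group: `X` generates `G`. -/
def Marked (X : Set G) : Prop := Subgroup.closure X = ⊤

/-- `(G, X)` is a strongly marked group. -/
def StronglyMarked (X : Set G) : Prop :=
  Marked X ∧ (1 : G) ∉ X ∧
    ∀ x ∈ X, ∀ y ∈ X, ∀ a b : ℤ, x ^ a ≠ 1 → y ^ b ≠ 1 →
      (x ^ a * y ^ b ∈ Syll X ∨ x ^ a * y ^ b = 1) → x = y

/-- The data of a Dyer graph: a simplicial graph with edge labels `m ≥ 2` and vertex
labels `f ∈ ℕ_{≥2} ∪ {∞}` such that any edge with `m(e) ≠ 2` has both endpoints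
labelled `2`. -/
structure DyerData (V : Type*) where
  adj : V → V → Prop
  symm : ∀ u v, adj u v → adj v u
  loopless : ∀ v, ¬ adj v v
  m : V → V → ℕ
  m_symm : ∀ u v, m u v = m v u
  m_two_le : ∀ u v, adj u v → 2 ≤ m u v
  f : V → ℕ∞
  f_two_le : ∀ v, 2 ≤ f v
  dyer : ∀ u v, adj u v → m u v ≠ 2 → f u = 2 ∧ f v = 2

/-- The defining relators of the Dyer group of `Δ`. -/
def DyerData.rels {V : Type*} (Δ : DyerData V) : Set (FreeGroup V) :=
  {r | ∃ v, Δ.f v ≠ ⊤ ∧ r = (FreeGroup.of v) ^ (Δ.f v).toNat} ∪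
  {r | ∃ u v, Δ.adj u v ∧
    r = altProd (FreeGroup.of u) (FreeGroup.of v) (Δ.m u v) *
        (altProd (FreeGroup.of v) (FreeGroup.of u) (Δ.m u v))⁻¹}

/-- The Dyer group of the data `Δ`. -/
abbrev DyerGroup {V : Type*} (Δ : DyerData V) := PresentedGroup Δ.rels

/-- The standard generating set of a Dyer group. -/
def DyerGens {V : Type*} (Δ : DyerData V) : Set (DyerGroup Δ) :=
  Set.range (PresentedGroup.of (rels := Δ.rels))

section AltList

variable {α : Type*}

@[simp]
theorem length_altList (a b : α) : ∀ n, (altList a b n).length = n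
  | 0 => rfl
  | n + 1 => by simp [altList, length_altList b a n]

theorem getElem?_altList (a b : α) :
    ∀ {n j : ℕ}, j < n → (altList a b n)[j]? = some (if Even j then a else b)
  | n + 1, 0, _ => by simp [altList]
  | n + 1, j + 1, h => by
    rw [altList, List.getElem?_cons_succ, getElem?_altList b a (by omega)]
    by_cases hj : Even j <;> simp [hj, Nat.even_add_one]

theorem eq_or_eq_of_mem_altList {a b c : α} : ∀ {n}, c ∈ altList a b n → c = a ∨ c = b
  | n + 1, h => by
    rcases List.mem_cons.1 h with h | h
    · exact .inl h
    · exact (eq_or_eq_of_mem_altList h).symm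

theorem mem_altList_iff {a b c : α} {n : ℕ} (hn : 2 ≤ n) :
    c ∈ altList a b n ↔ c = a ∨ c = b := by
  obtain ⟨n, rfl⟩ := Nat.exists_eq_add_of_le' hn
  refine ⟨eq_or_eq_of_mem_altList, ?_⟩
  rintro (rfl | rfl) <;> simp [altList]

theorem getElem?_cons_altList_append (c a b : α) (R : List α) {N r : ℕ}
    (hr : 1 ≤ r) (hrN : r ≤ N) :
    (c :: (altList a b N ++ R))[r]? = some (if Even r then b else a) := by
  obtain ⟨r, rfl⟩ := Nat.exists_eq_add_of_le' hr
  rw [List.getElem?_cons_succ, List.getElem?_append_left (by simp; omega),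
    getElem?_altList a b (by omega)]
  by_cases hr : Even r <;> simp [hr, Nat.even_add_one]

theorem altList_two_mul_add_two (a b : α) :
    ∀ j, altList a b (2 * j + 2) = altList a b (2 * j) ++ [a, b]
  | 0 => rfl
  | j + 1 => by
    change a :: b :: altList a b (2 * j + 2) = (a :: b :: altList a b (2 * j)) ++ [a, b]
    rw [altList_two_mul_add_two a b j]
    rfl

theorem isChain_cons_altList_append {R : α → α → Prop} {a b c d : α} (hca : R c a)
    (hab : R a b) (hba : R b a) (hbd : R b d) :
    ∀ j, (c :: (altList a b (2 * j + 2) ++ [d])).IsChain R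
  | 0 => by simp [altList, hca, hab, hbd]
  | j + 1 => by
    rw [show 2 * (j + 1) + 2 = 2 * j + 2 + 2 by ring]
    exact .cons_cons hca (.cons_cons hab (isChain_cons_altList_append hba hab hba hbd j))

end AltList

section AltProd

variable {M : Type*} [Monoid M] (a b : M)

@[simp]
theorem prod_altList (n : ℕ) : (altList a b n).prod = altProd a b n := rfl

theorem altProd_succ (n : ℕ) : altProd a b (n + 1) = a * altProd b a n :=
  List.prod_cons

theorem altProd_two_mul : ∀ j, altProd a b (2 * j) = (a * b) ^ j
  | 0 => (pow_zero _).symm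
  | j + 1 => by
    rw [show 2 * (j + 1) = 2 * j + 2 by ring, altProd, altList_two_mul_add_two, List.prod_append,
      ← altProd, altProd_two_mul j, pow_succ]
    simp

theorem altProd_two_mul_add_one (j : ℕ) : altProd a b (2 * j + 1) = (a * b) ^ j * a := by
  rw [altProd_succ, altProd_two_mul, mul_pow_mul]

theorem altProd_two : altProd a b 2 = a * b := by
  simpa using altProd_two_mul a b 1

theorem prod_cons_altList (c : M) (n : ℕ) :
    (c * a :: altList b a n).prod = c * altProd a b (n + 1) := by
  rw [List.prod_cons, prod_altList, mul_assoc, ← altProd_succ]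

end AltProd

section Involutions

variable {s t : G}

theorem altProd_mul_inv_altProd (hs : s * s = 1) (ht : t * t = 1) (n : ℕ) :
    altProd s t n * (altProd t s n)⁻¹ = (s * t) ^ n := by
  have hts : t * s = (s * t)⁻¹ := by
    rw [mul_inv_rev, inv_eq_of_mul_eq_one_right hs, inv_eq_of_mul_eq_one_right ht]
  obtain ⟨j, rfl | rfl⟩ := Nat.even_or_odd' n
  · rw [altProd_two_mul, altProd_two_mul, hts, inv_pow, inv_inv, ← pow_add, two_mul]
  · rw [altProd_two_mul_add_one, altProd_two_mul_add_one, hts, mul_inv_rev, inv_pow, inv_inv,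
      inv_eq_of_mul_eq_one_right ht, show 2 * j + 1 = j + 1 + j by ring, pow_add, pow_succ]
    simp only [mul_assoc]

theorem altProd_eq_altProd_iff (hs : s * s = 1) (ht : t * t = 1) (n : ℕ) :
    altProd s t n = altProd t s n ↔ (s * t) ^ n = 1 := by
  rw [← altProd_mul_inv_altProd hs ht, mul_inv_eq_one]

end Involutions

section Syllables

variable {X : Set G}

open Subgroup in
theorem mem_syll_of_mem_zpowers {x p : G} (hx : x ∈ X) (hp : p ∈ zpowers x) (hp1 : p ≠ 1) :
    p ∈ Syll X := by
  obtain ⟨a, rfl⟩ := mem_zpowers_iff.1 hp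
  exact ⟨x, hx, a, rfl, hp1⟩

theorem inv_mem_syll {p : G} (hp : p ∈ Syll X) : p⁻¹ ∈ Syll X := by
  obtain ⟨x, hx, a, rfl, hp1⟩ := hp
  exact ⟨x, hx, -a, (zpow_neg x a).symm, inv_ne_one.2 hp1⟩

@[simp]
theorem sylWord_nil : SylWord X [] := List.forall_mem_nil _

@[simp]
theorem sylWord_cons {c : G} {w : List G} : SylWord X (c :: w) ↔ c ∈ Syll X ∧ SylWord X w :=
  List.forall_mem_cons

@[simp]
theorem sylWord_append {w₁ w₂ : List G} :
    SylWord X (w₁ ++ w₂) ↔ SylWord X w₁ ∧ SylWord X w₂ :=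
  List.forall_mem_append

theorem sylWord_altList {s t : G} (hs : s ∈ Syll X) (ht : t ∈ Syll X) (n : ℕ) :
    SylWord X (altList s t n) :=
  fun _ hc => (eq_or_eq_of_mem_altList hc).elim (· ▸ hs) (· ▸ ht)

theorem sylLen_le_length {w : List G} (hw : SylWord X w) : sylLen X w.prod ≤ w.length :=
  Nat.sInf_le ⟨w, hw, rfl, rfl⟩

theorem reduced_of_length_le {w : List G} (hw : SylWord X w) (h : w.length ≤ sylLen X w.prod) :
    Reduced X w :=
  ⟨hw, le_antisymm h (sylLen_le_length hw)⟩

theorem exists_sylWord_prod_eq (hM : Marked X) (h1 : (1 : G) ∉ X) (g : G) :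
    ∃ w, SylWord X w ∧ w.prod = g := by
  have hg : g ∈ Subgroup.closure X := hM ▸ Subgroup.mem_top g
  induction hg using Subgroup.closure_induction with
  | mem x hx =>
    have hx1 : x ≠ 1 := ne_of_mem_of_not_mem hx h1
    exact ⟨[x], sylWord_cons.2 ⟨⟨x, hx, 1, (zpow_one x).symm, hx1⟩, sylWord_nil⟩,
      List.prod_singleton⟩
  | one => exact ⟨[], sylWord_nil, rfl⟩
  | mul g h _ _ ihg ihh =>
    obtain ⟨v, hv, rfl⟩ := ihg
    obtain ⟨w, hw, rfl⟩ := ihh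
    exact ⟨v ++ w, sylWord_append.2 ⟨hv, hw⟩, List.prod_append⟩
  | inv g _ ih =>
    obtain ⟨w, hw, rfl⟩ := ih
    refine ⟨(w.map (·⁻¹)).reverse, fun c hc => ?_, (List.prod_inv_reverse w).symm⟩
    obtain ⟨d, hd, rfl⟩ := List.mem_map.1 (List.mem_reverse.1 hc)
    exact inv_mem_syll (hw d hd)

theorem exists_reduced (hM : Marked X) (h1 : (1 : G) ∉ X) (g : G) :
    ∃ w, Reduced X w ∧ w.prod = g := by
  obtain ⟨w, hw, rfl⟩ := exists_sylWord_prod_eq hM h1 g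
  obtain ⟨v, hv, hvw, hlen⟩ := Nat.sInf_mem (⟨_, w, hw, rfl, rfl⟩ :
    {n | ∃ v : List G, SylWord X v ∧ v.prod = w.prod ∧ v.length = n}.Nonempty)
  exact ⟨v, ⟨hv, hvw ▸ hlen⟩, hvw⟩

theorem sylLen_mul_le (hM : Marked X) (h1 : (1 : G) ∉ X) {c : G} (hc : c ∈ Syll X) (g : G) :
    sylLen X (c * g) ≤ sylLen X g + 1 := by
  obtain ⟨w, ⟨hw, hlen⟩, rfl⟩ := exists_reduced hM h1 g
  simpa [hlen] using sylLen_le_length (X := X) (w := c :: w) (sylWord_cons.2 ⟨hc, hw⟩)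

theorem sylLen_mul_right_le (hM : Marked X) (h1 : (1 : G) ∉ X) {c : G} (hc : c ∈ Syll X)
    (g : G) : sylLen X (g * c) ≤ sylLen X g + 1 := by
  obtain ⟨w, ⟨hw, hlen⟩, rfl⟩ := exists_reduced hM h1 g
  simpa [hlen] using sylLen_le_length (X := X) (w := w ++ [c]) (by simp [hw, hc])

end Syllables

section PropertyD

variable {X : Set G}

/-- Two syllables `p, q` can be merged by a type I operation. -/
def Mergeable (X : Set G) (p q : G) : Prop := p * q ∈ Syll X ∨ p * q = 1

theorem MOpII.mem_iff {w w' : List G} (h : MOpII X w w') (c : G) : c ∈ w ↔ c ∈ w' := by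
  obtain ⟨w₁, w₂, s, t, n, -, -, hn, -, -, rfl, rfl⟩ := h
  simp only [List.mem_append, mem_altList_iff hn, or_comm (a := c = s)]

theorem PropertyD.mem_iff (hPD : PropertyD X) {w w' : List G} (hw : Reduced X w)
    (hw' : Reduced X w') (h : w.prod = w'.prod) (c : G) : c ∈ w ↔ c ∈ w' := by
  have hchain := hPD.2 w w' hw hw' h
  clear hw hw' h
  induction hchain with
  | refl => rfl
  | tail _ hstep ih => exact ih.trans (hstep.mem_iff c)

theorem PropertyD.exists_mOpII_of_ne (hPD : PropertyD X) {w w' : List G} (hw : Reduced X w)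
    (hw' : Reduced X w') (h : w.prod = w'.prod) (hne : w ≠ w') : ∃ w'', MOpII X w w'' := by
  rcases (hPD.2 w w' hw hw' h).cases_head with heq | ⟨w'', hstep, -⟩
  exacts [absurd heq hne, ⟨w'', hstep⟩]

theorem PropertyD.exists_mOp (hPD : PropertyD X) {w : List G} (hw : SylWord X w)
    (hred : ¬ Reduced X w) : ∃ w', MOp X w w' := by
  have hM : ¬ MReduced X w := fun h => hred ((hPD.1 w hw).2 h)
  simp only [MReduced, not_forall, not_not] at hM
  obtain ⟨w', hchain, hlt⟩ := hM
  rcases hchain.cases_head with rfl | ⟨w'', hstep, -⟩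
  exacts [absurd hlt (lt_irrefl _), ⟨w'', hstep⟩]

theorem PropertyD.not_reduced_of_mergeable (hPD : PropertyD X) {w₁ w₂ : List G} {p q : G}
    (hw : SylWord X (w₁ ++ [p, q] ++ w₂)) (hpq : Mergeable X p q) :
    ¬ Reduced X (w₁ ++ [p, q] ++ w₂) := by
  intro hred
  have hp : p ∈ Syll X := hw p (by simp)
  have hq : q ∈ Syll X := hw q (by simp)
  refine hpq.elim (fun hpq => ?_) (fun hpq => ?_)
  · refine (hPD.1 _ hw).1 hred (w₁ ++ [p * q] ++ w₂) (.single (.inl ?_)) (by simp)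
    exact ⟨w₁, w₂, p, q, hp, hq, rfl, .inl ⟨hpq, rfl⟩⟩
  · refine (hPD.1 _ hw).1 hred (w₁ ++ w₂) (.single (.inl ?_)) (by simp)
    exact ⟨w₁, w₂, p, q, hp, hq, rfl, .inr ⟨hpq, rfl⟩⟩

theorem PropertyD.inv_mem_of_sylLen_mul_lt (hPD : PropertyD X) (hM : Marked X)
    (h1 : (1 : G) ∉ X) {c : G} (hc : c ∈ Syll X) {w : List G} (hw : Reduced X w)
    (hlt : sylLen X (c * w.prod) < sylLen X w.prod) : c⁻¹ ∈ w := by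
  obtain ⟨v, ⟨hv, hvlen⟩, hvprod⟩ := exists_reduced hM h1 (c * w.prod)
  have hred : Reduced X (c⁻¹ :: v) := by
    refine reduced_of_length_le (sylWord_cons.2 ⟨inv_mem_syll hc, hv⟩) ?_
    simp only [List.prod_cons, hvprod, inv_mul_cancel_left, List.length_cons, hvlen]
    omega
  exact (hPD.mem_iff hred hw (by simp [hvprod]) _).1 List.mem_cons_self

theorem PropertyD.inv_mem_of_sylLen_mul_right_lt (hPD : PropertyD X) (hM : Marked X)
    (h1 : (1 : G) ∉ X) {c : G} (hc : c ∈ Syll X) {w : List G} (hw : Reduced X w)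
    (hlt : sylLen X (w.prod * c) < sylLen X w.prod) : c⁻¹ ∈ w := by
  obtain ⟨v, ⟨hv, hvlen⟩, hvprod⟩ := exists_reduced hM h1 (w.prod * c)
  have hred : Reduced X (v ++ [c⁻¹]) := by
    refine reduced_of_length_le (by simp [hv, inv_mem_syll hc]) ?_
    simp only [List.prod_append, hvprod, List.prod_singleton, mul_inv_cancel_right,
      List.length_append, List.length_singleton, hvlen]
    omega
  exact (hPD.mem_iff hred hw (by simp [hvprod]) _).1 (by simp)

theorem MOpI.not_isChain {w w' : List G} (h : MOpI X w w') :
    ¬ w.IsChain (fun p q => ¬ Mergeable X p q) := by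
  obtain ⟨w₁, w₂, p, q, -, -, rfl, hpq⟩ := h
  rw [List.append_assoc, List.cons_append, List.cons_append, List.isChain_append_cons_cons]
  exact fun h => h.2.1 (hpq.imp And.left And.left)

theorem MOpII.exists_block {w w' : List G} (h : MOpII X w w') :
    ∃ i n s t, 2 ≤ n ∧ i + n ≤ w.length ∧ altProd s t n = altProd t s n ∧
      ∀ j < n, w[i + j]? = some (if Even j then s else t) := by
  obtain ⟨w₁, w₂, s, t, n, -, -, hn, hbraid, -, rfl, -⟩ := h
  refine ⟨w₁.length, n, s, t, hn, by simp, hbraid, fun j hj => ?_⟩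
  rw [List.append_assoc, List.getElem?_append_right (by omega), Nat.add_sub_cancel_left,
    List.getElem?_append_left (by simpa using hj), getElem?_altList s t hj]

end PropertyD

section Blocks

variable {c s t p q : G} {N i n : ℕ}

theorem braid_block_cons_altList {R : List G} (hN : 2 ≤ N) (hn : 2 ≤ n)
    (hpq : altProd p q n = altProd q p n)
    (hblock : ∀ j < n, (c :: (altList t s N ++ R))[i + j]? = some (if Even j then p else q)) :
    (i = 0 ∧ (c = s ∨ c * t = t * c)) ∨ (n ≤ N ∧ altProd s t n = altProd t s n) ∨
      N + 1 < i + n := by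
  have hW := fun r => getElem?_cons_altList_append c t s R (N := N) (r := r)
  have h0 := hblock 0 (by omega)
  have h1 := hblock 1 (by omega)
  rcases Nat.eq_zero_or_pos i with rfl | hi
  · rw [zero_add, hW 1 le_rfl (by omega)] at h1
    simp only [List.getElem?_cons_zero, add_zero, Option.some.injEq] at h0 h1
    simp only [Even.zero, if_true, Nat.not_even_one, if_false] at h0 h1
    subst h0 h1
    refine .inl ⟨rfl, ?_⟩
    rcases (show n = 2 ∨ 3 ≤ n by omega) with rfl | hn3
    · exact .inr (by simpa [altProd_two] using hpq)
    · have h2 := hblock 2 hn3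
      rw [zero_add, hW 2 (by omega) (by omega)] at h2
      exact .inl (by simpa using h2.symm)
  · refine .inr ?_
    by_cases hin : i + n ≤ N + 1
    · refine .inl ⟨by omega, ?_⟩
      rw [add_zero, hW i hi (by omega)] at h0
      rw [hW (i + 1) (by omega) (by omega)] at h1
      by_cases he : Even i
      · simp only [he, ↓reduceIte, Even.zero, Option.some.injEq, Nat.even_add_one,
          not_true_eq_false] at h0 h1
        subst h0 h1
        exact hpq
      · simp only [he, ↓reduceIte, Even.zero, Option.some.injEq, Nat.even_add_one,
          not_false_eq_true, not_true_eq_false] at h0 h1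
        subst h0 h1
        exact hpq.symm
    · exact .inr (by omega)

theorem braid_block_cons_altList_end {v : G} (hN : 2 ≤ N) (hNe : Even N)
    (hn : 2 ≤ n) (hend : i + n = N + 2) (hpq : altProd p q n = altProd q p n)
    (hblock : ∀ j < n, (c :: (altList t s N ++ [v]))[i + j]? = some (if Even j then p else q)) :
    v = t ∨ s * v = v * s := by
  have hW := fun r => getElem?_cons_altList_append c t s [v] (N := N) (r := r)
  have hlast : (c :: (altList t s N ++ [v]))[N + 1]? = some v := by
    rw [List.getElem?_cons_succ, List.getElem?_append_right (by simp)]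
    simp
  rcases (show n = 2 ∨ 3 ≤ n by omega) with rfl | hn3
  · have h0 := hblock 0 (by omega)
    have h1 := hblock 1 (by omega)
    rw [add_zero, show i = N by omega, hW N (by omega) le_rfl] at h0
    rw [show i + 1 = N + 1 by omega, hlast] at h1
    simp only [hNe, ↓reduceIte, Even.zero, Option.some.injEq, Nat.not_even_one] at h0 h1
    subst h0 h1
    exact .inr (by simpa [altProd_two] using hpq)
  · obtain ⟨n, rfl⟩ := Nat.exists_eq_add_of_le' hn3
    have hfar := hblock n (by omega)
    have hnear := hblock (n + 2) (by omega)
    rw [show i + n = N - 1 by omega, hW (N - 1) (by omega) (by omega)] at hfar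
    rw [show i + (n + 2) = N + 1 by omega, hlast] at hnear
    have hodd : ¬ Even (N - 1) := by
      obtain ⟨r, hr⟩ := hNe
      rw [Nat.not_even_iff_odd]
      exact ⟨r - 1, by omega⟩
    refine .inl ?_
    simp only [hodd, if_false, Option.some.injEq, Nat.even_add_one, not_not] at hfar hnear
    rw [hnear, ← hfar]

end Blocks

section StronglyMarked

open Subgroup

variable {X : Set G} {x y p q : G}

theorem mergeable_of_mem_zpowers (hx : x ∈ X) (hp : p ∈ zpowers x) (hq : q ∈ zpowers x) :
    Mergeable X p q := by
  by_cases hpq : p * q = 1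
  exacts [.inr hpq, .inl (mem_syll_of_mem_zpowers hx (mul_mem hp hq) hpq)]

theorem StronglyMarked.ne_of_mem_zpowers (hSM : StronglyMarked X) (hx : x ∈ X) (hy : y ∈ X)
    (hxy : x ≠ y) (hp : p ∈ zpowers x) (hq : q ∈ zpowers y) (hp1 : p ≠ 1) : p ≠ q := by
  obtain ⟨a, rfl⟩ := mem_zpowers_iff.1 hp
  obtain ⟨b, rfl⟩ := mem_zpowers_iff.1 hq
  intro h
  refine hxy (hSM.2.2 x hx y hy a (-b) hp1 ?_ (.inr ?_))
  · rwa [zpow_neg, inv_ne_one, ← h]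
  · rw [zpow_neg, h, mul_inv_cancel]

theorem StronglyMarked.not_mergeable (hSM : StronglyMarked X) (hx : x ∈ X) (hy : y ∈ X)
    (hxy : x ≠ y) (hp : p ∈ zpowers x) (hq : q ∈ zpowers y) (hp1 : p ≠ 1) (hq1 : q ≠ 1) :
    ¬ Mergeable X p q := by
  obtain ⟨a, rfl⟩ := mem_zpowers_iff.1 hp
  obtain ⟨b, rfl⟩ := mem_zpowers_iff.1 hq
  exact fun h => hxy (hSM.2.2 x hx y hy a b hp1 hq1 h)

end StronglyMarked

/-- The hypotheses of the theorem, for the syllables `s = x ^ a` and `t = y ^ b` and for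
`m = 2 * k + 1`. -/
structure OddBraid (X : Set G) (x y s t : G) (k : ℕ) : Prop where
  stronglyMarked : StronglyMarked X
  propertyD : PropertyD X
  mem_left : x ∈ X
  mem_right : y ∈ X
  ne : x ≠ y
  mem_zpowers_left : s ∈ Subgroup.zpowers x
  mem_zpowers_right : t ∈ Subgroup.zpowers y
  left_ne_one : s ≠ 1
  right_ne_one : t ≠ 1
  braid : altProd s t (2 * k + 1) = altProd t s (2 * k + 1)
  sylLen_eq : sylLen X (altProd s t (2 * k + 1)) = 2 * k + 1

namespace OddBraid

open Subgroup

variable {X : Set G} {x y s t : G} {k : ℕ}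

theorem symm (h : OddBraid X x y s t k) : OddBraid X y x t s k where
  __ := h
  mem_left := h.mem_right
  mem_right := h.mem_left
  ne := h.ne.symm
  mem_zpowers_left := h.mem_zpowers_right
  mem_zpowers_right := h.mem_zpowers_left
  left_ne_one := h.right_ne_one
  right_ne_one := h.left_ne_one
  braid := h.braid.symm
  sylLen_eq := h.braid ▸ h.sylLen_eq

theorem marked (h : OddBraid X x y s t k) : Marked X := h.stronglyMarked.1

theorem one_not_mem (h : OddBraid X x y s t k) : (1 : G) ∉ X := h.stronglyMarked.2.1

theorem ne_of_mem_zpowers (h : OddBraid X x y s t k) {p q : G} (hp : p ∈ zpowers x)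
    (hq : q ∈ zpowers y) (hp1 : p ≠ 1) : p ≠ q :=
  h.stronglyMarked.ne_of_mem_zpowers h.mem_left h.mem_right h.ne hp hq hp1

theorem left_mem_syll (h : OddBraid X x y s t k) : s ∈ Syll X :=
  mem_syll_of_mem_zpowers h.mem_left h.mem_zpowers_left h.left_ne_one

theorem right_mem_syll (h : OddBraid X x y s t k) : t ∈ Syll X := h.symm.left_mem_syll

theorem one_le (h : OddBraid X x y s t k) : 1 ≤ k := by
  refine Nat.pos_of_ne_zero fun hk => h.ne_of_mem_zpowers h.mem_zpowers_left
    h.mem_zpowers_right h.left_ne_one ?_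
  simpa [hk, altProd, altList] using h.braid

theorem reduced_altList (h : OddBraid X x y s t k) : Reduced X (altList s t (2 * k + 1)) :=
  ⟨sylWord_altList h.left_mem_syll h.right_mem_syll _, by simpa using h.sylLen_eq.symm⟩

theorem eq_altProd_mul (h : OddBraid X x y s t k) :
    altProd s t (2 * k + 1) = altProd t s (2 * k) * t := by
  rw [h.braid, altProd_two_mul_add_one, altProd_two_mul]

theorem left_mul_eq_mul_right (h : OddBraid X x y s t k) :
    s * altProd s t (2 * k + 1) = altProd s t (2 * k + 1) * t := by
  rw [h.braid, ← altProd_succ, show 2 * k + 1 + 1 = 2 * (k + 1) by ring, altProd_two_mul,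
    ← h.braid, altProd_two_mul_add_one, pow_succ, mul_assoc]

theorem sylLen_left_mul_ne (h : OddBraid X x y s t k) :
    sylLen X (s * altProd s t (2 * k + 1)) ≠ 2 * k + 1 := by
  intro hlen
  have hk := h.one_le
  have hs := h.mem_zpowers_left
  have ht := h.mem_zpowers_right
  have hts := sylWord_altList h.right_mem_syll h.left_mem_syll (2 * k)
  have hshort : sylLen X (altProd t s (2 * k)) ≤ 2 * k := by simpa using sylLen_le_length hts
  by_cases hss : s * s = 1
  · rw [altProd_succ, ← mul_assoc, hss, one_mul] at hlen
    omega
  by_cases htt : t * t = 1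
  · rw [h.left_mul_eq_mul_right, h.eq_altProd_mul, mul_assoc, htt, mul_one] at hlen
    omega
  -- `s * g` has the two reduced words `(s * s) t s ⋯ s` and `t s ⋯ s (t * t)`.
  have hprod₁ : (s * s :: altList t s (2 * k)).prod = s * altProd s t (2 * k + 1) :=
    prod_cons_altList s t s _
  have hprod₂ : (altList t s (2 * k) ++ [t * t]).prod = s * altProd s t (2 * k + 1) := by
    rw [List.prod_append, List.prod_singleton, prod_altList, h.left_mul_eq_mul_right,
      h.eq_altProd_mul, mul_assoc]
  have hw₁ : Reduced X (s * s :: altList t s (2 * k)) := by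
    refine reduced_of_length_le ?_ (by simp [hprod₁, hlen])
    simp [mem_syll_of_mem_zpowers h.mem_left (mul_mem hs hs) hss, hts]
  have hw₂ : Reduced X (altList t s (2 * k) ++ [t * t]) := by
    refine reduced_of_length_le ?_ (by simp [hprod₂, hlen])
    simp [mem_syll_of_mem_zpowers h.mem_right (mul_mem ht ht) htt, hts]
  have hmem :=
    (h.propertyD.mem_iff hw₁ hw₂ (hprod₁.trans hprod₂.symm) (s * s)).1 List.mem_cons_self
  simp only [List.mem_append, List.mem_singleton, mem_altList_iff (by omega : 2 ≤ 2 * k)] at hmem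
  rcases hmem with (hst | hss') | hst
  · exact h.ne_of_mem_zpowers (mul_mem hs hs) ht hss hst
  · exact h.left_ne_one (mul_eq_right.1 hss')
  · exact h.ne_of_mem_zpowers (mul_mem hs hs) (mul_mem ht ht) hss hst

theorem mul_self_eq_one (h : OddBraid X x y s t k) : s * s = 1 := by
  have hs := h.mem_zpowers_left
  have hlt : sylLen X (s * altProd s t (2 * k + 1)) < sylLen X (altProd s t (2 * k + 1)) := by
    have hle := sylLen_mul_le h.marked h.one_not_mem h.left_mem_syll (altProd s t (2 * k + 1))
    have hne : sylLen X (s * altProd s t (2 * k + 1)) ≠ 2 * k + 2 := by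
      intro hlen
      have hw : SylWord X ([] ++ [s, s] ++ altList t s (2 * k)) := by
        simp [h.left_mem_syll, sylWord_altList h.right_mem_syll h.left_mem_syll]
      refine h.propertyD.not_reduced_of_mergeable hw
        (mergeable_of_mem_zpowers h.mem_left hs hs) (reduced_of_length_le hw ?_)
      simp [← altProd_succ, hlen]
    have := h.sylLen_left_mul_ne
    rw [h.sylLen_eq] at hle ⊢
    omega
  rcases eq_or_eq_of_mem_altList
      (h.propertyD.inv_mem_of_sylLen_mul_lt h.marked h.one_not_mem h.left_mem_syll
        h.reduced_altList hlt) with hss | hst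
  · exact inv_eq_iff_mul_eq_one.1 hss
  · exact absurd hst (h.ne_of_mem_zpowers (inv_mem hs) h.mem_zpowers_right
      (inv_ne_one.2 h.left_ne_one))

theorem orderOf_mul (h : OddBraid X x y s t k) : orderOf (s * t) = 2 * k + 1 := by
  have hss := h.mul_self_eq_one
  have htt := h.symm.mul_self_eq_one
  obtain ⟨q, hq⟩ := orderOf_dvd_of_pow_eq_one ((altProd_eq_altProd_iff hss htt _).1 h.braid)
  set o := orderOf (s * t)
  by_contra hne
  have hq3 : 3 ≤ q := by
    have hodd : Odd (o * q) := hq ▸ odd_two_mul_add_one k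
    obtain ⟨r, rfl⟩ := Nat.Odd.of_mul_right hodd
    rcases r with _ | r
    · exact absurd (by simpa using hq.symm) hne
    · omega
  have ho : 0 < o := Nat.pos_of_ne_zero fun ho => by simp [ho] at hq
  -- `g = (s * t) ^ k * s` is already spelled by the shorter word `(s t)^(k mod o) s`.
  have hshort := sylLen_le_length
    (sylWord_altList h.left_mem_syll h.right_mem_syll (2 * (k % o) + 1))
  rw [prod_altList, altProd_two_mul_add_one, pow_mod_orderOf, ← altProd_two_mul_add_one,
    h.sylLen_eq, length_altList] at hshort
  have := Nat.mod_lt k ho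
  have := Nat.mul_le_mul_left o hq3
  omega

theorem altProd_ne_altProd (h : OddBraid X x y s t k) {n : ℕ} (hn : 1 ≤ n)
    (hnk : n < 2 * k + 1) :
    altProd s t n ≠ altProd t s n := by
  intro heq
  have := Nat.le_of_dvd hn (h.orderOf_mul ▸ orderOf_dvd_of_pow_eq_one
    ((altProd_eq_altProd_iff h.mul_self_eq_one h.symm.mul_self_eq_one n).1 heq))
  omega

theorem mul_left_ne_one (h : OddBraid X x y s t k) (hx2 : x * x ≠ 1) : x * s ≠ 1 := by
  intro hxs
  rw [eq_inv_of_mul_eq_one_left hxs, inv_eq_of_mul_eq_one_right h.mul_self_eq_one] at hx2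
  exact hx2 h.mul_self_eq_one

theorem mul_right_ne_one (h : OddBraid X x y s t k) (hy2 : y * y ≠ 1) : t * y ≠ 1 :=
  mul_eq_one_comm.not.1 (h.symm.mul_left_ne_one hy2)

theorem prod_altList_append_mul (h : OddBraid X x y s t k) :
    (altList t s (2 * k) ++ [t * y]).prod = altProd s t (2 * k + 1) * y := by
  rw [List.prod_append, List.prod_singleton, prod_altList, h.eq_altProd_mul, mul_assoc]

theorem reduced_mul_left (h : OddBraid X x y s t k) (hx2 : x * x ≠ 1) :
    Reduced X (x * s :: altList t s (2 * k)) := by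
  have hx1 : x ≠ 1 := ne_of_mem_of_not_mem h.mem_left h.one_not_mem
  refine reduced_of_length_le ?_ ?_
  · simp [mem_syll_of_mem_zpowers h.mem_left (mul_mem (mem_zpowers x) h.mem_zpowers_left)
      (h.mul_left_ne_one hx2), sylWord_altList h.right_mem_syll h.left_mem_syll]
  rw [prod_cons_altList, List.length_cons, length_altList]
  by_contra! hlt
  have hmem := h.propertyD.inv_mem_of_sylLen_mul_lt h.marked h.one_not_mem
    (mem_syll_of_mem_zpowers h.mem_left (mem_zpowers x) hx1) h.reduced_altList
    (by rw [prod_altList, h.sylLen_eq]; omega)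
  rcases eq_or_eq_of_mem_altList hmem with hxs | hxt
  · rw [inv_eq_iff_eq_inv.1 hxs, ← mul_inv_rev, h.mul_self_eq_one, inv_one] at hx2
    exact hx2 rfl
  · exact h.ne_of_mem_zpowers (inv_mem (mem_zpowers x)) h.mem_zpowers_right (inv_ne_one.2 hx1) hxt

theorem reduced_mul_right (h : OddBraid X x y s t k) (hy2 : y * y ≠ 1) :
    Reduced X (altList t s (2 * k) ++ [t * y]) := by
  have hy1 : y ≠ 1 := ne_of_mem_of_not_mem h.mem_right h.one_not_mem
  refine reduced_of_length_le ?_ ?_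
  · simp [mem_syll_of_mem_zpowers h.mem_right (mul_mem h.mem_zpowers_right (mem_zpowers y))
      (h.mul_right_ne_one hy2), sylWord_altList h.right_mem_syll h.left_mem_syll]
  rw [h.prod_altList_append_mul]
  simp only [List.length_append, length_altList, List.length_singleton]
  by_contra! hlt
  have hmem := h.propertyD.inv_mem_of_sylLen_mul_right_lt h.marked h.one_not_mem
    (mem_syll_of_mem_zpowers h.mem_right (mem_zpowers y) hy1) h.reduced_altList
    (by rw [prod_altList, h.sylLen_eq]; omega)
  rcases eq_or_eq_of_mem_altList hmem with hys | hyt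
  · exact h.symm.ne_of_mem_zpowers (inv_mem (mem_zpowers y)) h.mem_zpowers_left
      (inv_ne_one.2 hy1) hys
  · rw [inv_eq_iff_eq_inv.1 hyt, ← mul_inv_rev, h.symm.mul_self_eq_one, inv_one] at hy2
    exact hy2 rfl

theorem sylLen_mul_left (h : OddBraid X x y s t k) (hx2 : x * x ≠ 1) :
    sylLen X (x * altProd s t (2 * k + 1)) = 2 * k + 1 := by
  have := (h.reduced_mul_left hx2).2
  rw [prod_cons_altList, List.length_cons, length_altList] at this
  exact this.symm

theorem prod_cons_altList_append_mul (h : OddBraid X x y s t k) :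
    (x :: (altList t s (2 * k) ++ [t * y])).prod = x * altProd s t (2 * k + 1) * y := by
  rw [List.prod_cons, h.prod_altList_append_mul, mul_assoc]

theorem sylWord_cons_altList_append_mul (h : OddBraid X x y s t k) (hy2 : y * y ≠ 1) :
    SylWord X (x :: (altList t s (2 * k) ++ [t * y])) :=
  sylWord_cons.2 ⟨mem_syll_of_mem_zpowers h.mem_left (mem_zpowers x)
    (ne_of_mem_of_not_mem h.mem_left h.one_not_mem), (h.reduced_mul_right hy2).1⟩

theorem sylLen_mul_mul_ne_two_mul (h : OddBraid X x y s t k) (hx2 : x * x ≠ 1)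
    (hy2 : y * y ≠ 1) : sylLen X (x * altProd s t (2 * k + 1) * y) ≠ 2 * k := by
  intro hlen
  have hy1 : y ≠ 1 := ne_of_mem_of_not_mem h.mem_right h.one_not_mem
  have hmem := h.propertyD.inv_mem_of_sylLen_mul_right_lt h.marked h.one_not_mem
    (mem_syll_of_mem_zpowers h.mem_right (mem_zpowers y) hy1) (h.reduced_mul_left hx2)
    (by rw [prod_cons_altList, hlen, h.sylLen_mul_left hx2]; omega)
  simp only [List.mem_cons, mem_altList_iff (by have := h.one_le; omega : 2 ≤ 2 * k)] at hmem
  rcases hmem with hyx | hyt | hys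
  · exact h.ne_of_mem_zpowers (mul_mem (mem_zpowers x) h.mem_zpowers_left)
      (inv_mem (mem_zpowers y)) (h.mul_left_ne_one hx2) hyx.symm
  · exact h.mul_right_ne_one hy2 (by rw [← hyt, inv_mul_cancel])
  · exact h.symm.ne_of_mem_zpowers (inv_mem (mem_zpowers y)) h.mem_zpowers_left
      (inv_ne_one.2 hy1) hys

theorem sylLen_mul_mul_ne_two_mul_add_two (h : OddBraid X x y s t k) (hx2 : x * x ≠ 1)
    (hy2 : y * y ≠ 1) : sylLen X (x * altProd s t (2 * k + 1) * y) ≠ 2 * k + 2 := by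
  intro hlen
  have hF := h.reduced_mul_left hx2
  have hyS : y ∈ Syll X := mem_syll_of_mem_zpowers h.mem_right (mem_zpowers y)
    (ne_of_mem_of_not_mem h.mem_right h.one_not_mem)
  -- Both `x (t s ⋯ s) (t * y)` and `(x * s) (t s ⋯ s) y` are then reduced.
  have hW : Reduced X (x :: (altList t s (2 * k) ++ [t * y])) :=
    reduced_of_length_le (h.sylWord_cons_altList_append_mul hy2)
      (by simp [h.prod_cons_altList_append_mul, hlen])
  have hFy : Reduced X ((x * s :: altList t s (2 * k)) ++ [y]) := by
    refine reduced_of_length_le (sylWord_append.2 ⟨hF.1, by simp [hyS]⟩) ?_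
    rw [List.prod_append, prod_cons_altList, List.prod_singleton, hlen]
    simp
  have hmem := (h.propertyD.mem_iff hW hFy (by rw [h.prod_cons_altList_append_mul,
    List.prod_append, prod_cons_altList, List.prod_singleton]) x).1 List.mem_cons_self
  simp only [List.cons_append, List.mem_cons, List.mem_append, List.not_mem_nil, or_false,
    mem_altList_iff (by have := h.one_le; omega : 2 ≤ 2 * k)] at hmem
  rcases hmem with hxs | (hxt | hxs) | hxy
  · exact h.left_ne_one (mul_eq_left.1 hxs.symm)
  · exact h.ne_of_mem_zpowers (mem_zpowers x) h.mem_zpowers_right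
      (ne_of_mem_of_not_mem h.mem_left h.one_not_mem) hxt
  · exact hx2 (hxs ▸ h.mul_self_eq_one)
  · exact h.ne hxy

theorem sylLen_mul_mul (h : OddBraid X x y s t k) (hx2 : x * x ≠ 1) (hy2 : y * y ≠ 1) :
    sylLen X (x * altProd s t (2 * k + 1) * y) = 2 * k + 1 := by
  have hlower : sylLen X (x * altProd s t (2 * k + 1)) ≤
      sylLen X (x * altProd s t (2 * k + 1) * y) + 1 := by
    simpa using sylLen_mul_right_le h.marked h.one_not_mem
      (inv_mem_syll (mem_syll_of_mem_zpowers h.mem_right (mem_zpowers y)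
        (ne_of_mem_of_not_mem h.mem_right h.one_not_mem))) (x * altProd s t (2 * k + 1) * y)
  have hupper := sylLen_le_length (h.sylWord_cons_altList_append_mul hy2)
  rw [h.prod_cons_altList_append_mul] at hupper
  simp only [List.length_cons, List.length_append, length_altList, List.length_nil] at hupper
  have := h.sylLen_mul_mul_ne_two_mul hx2 hy2
  have := h.sylLen_mul_mul_ne_two_mul_add_two hx2 hy2
  rw [h.sylLen_mul_left hx2] at hlower
  omega

theorem mul_comm_ne_left (h : OddBraid X x y s t k) (hx2 : x * x ≠ 1) : x * t ≠ t * x := by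
  intro hxt
  have hk := h.one_le
  have hx1 : x ≠ 1 := ne_of_mem_of_not_mem h.mem_left h.one_not_mem
  have hxs : Commute x s := by
    obtain ⟨a, ha⟩ := mem_zpowers_iff.1 h.mem_zpowers_left
    exact ha ▸ (Commute.refl x).zpow_right a
  have hF := h.reduced_mul_left hx2
  -- `x` commutes with `g = (s t)^k s`, so `x g = (s t)^k (x s)` has a second reduced word.
  have hprod : (altList s t (2 * k) ++ [x * s]).prod = x * altProd s t (2 * k + 1) := by
    rw [List.prod_append, List.prod_singleton, prod_altList, altProd_two_mul,
      altProd_two_mul_add_one, ← mul_assoc, ← ((hxs.mul_right hxt).pow_right k).eq, mul_assoc]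
  have hG : Reduced X (altList s t (2 * k) ++ [x * s]) := by
    refine reduced_of_length_le (sylWord_append.2 ⟨sylWord_altList h.left_mem_syll
      h.right_mem_syll _, sylWord_cons.2 ⟨(sylWord_cons.1 hF.1).1, sylWord_nil⟩⟩) ?_
    rw [hprod, ← prod_cons_altList, ← hF.2]
    simp
  have hne : x * s :: altList t s (2 * k) ≠ altList s t (2 * k) ++ [x * s] := by
    intro heq
    have h0 := congrArg (·[0]?) heq
    rw [List.getElem?_cons_zero, List.getElem?_append_left (by simp; omega),
      getElem?_altList s t (by omega)] at h0
    exact hx1 (by simpa using h0)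
  obtain ⟨F', hop⟩ :=
    h.propertyD.exists_mOpII_of_ne hF hG (by rw [prod_cons_altList, hprod]) hne
  obtain ⟨i, n, p, q, hn, hlen, hpq, hblock⟩ := hop.exists_block
  rw [← List.append_nil (altList t s (2 * k))] at hblock
  rcases braid_block_cons_altList (by omega) hn hpq hblock with
    ⟨-, hss | hst⟩ | ⟨hnk, hst⟩ | hend
  · exact hx1 (mul_eq_right.1 hss)
  · refine h.altProd_ne_altProd (n := 2) (by omega) (by omega) ?_
    rw [altProd_two, altProd_two]
    refine mul_left_cancel (a := x) ?_
    rw [← mul_assoc, hst, ← mul_assoc, ← hxt, mul_assoc]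
  · exact h.altProd_ne_altProd (by omega) (by omega) hst
  · simp at hlen
    omega

theorem mul_comm_ne_right (h : OddBraid X x y s t k) (hy2 : y * y ≠ 1) :
    s * (t * y) ≠ t * y * s := by
  intro hsv
  obtain ⟨j, rfl⟩ : ∃ j, k = j + 1 := ⟨k - 1, by have := h.one_le; omega⟩
  have hA := h.reduced_mul_right hy2
  rw [show 2 * (j + 1) = 2 * j + 2 by ring, altList_two_mul_add_two] at hA
  have hV : SylWord X (altList t s (2 * j) ++ [t, t * y] ++ [s]) := by
    have := hA.1
    simp only [sylWord_append, sylWord_cons, sylWord_nil, and_true] at this ⊢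
    tauto
  -- `t s (t y) = t (t y) s`, and the letters `t`, `t y` merge.
  refine h.propertyD.not_reduced_of_mergeable hV (mergeable_of_mem_zpowers h.mem_right
    h.mem_zpowers_right (mul_mem h.mem_zpowers_right (mem_zpowers y))) (reduced_of_length_le hV ?_)
  have hprod : (altList t s (2 * j) ++ [t, t * y] ++ [s]).prod =
      (altList t s (2 * j) ++ [t, s] ++ [t * y]).prod := by
    simp [mul_assoc, hsv]
  rw [hprod, ← hA.2]
  simp

theorem isChain_not_mergeable (h : OddBraid X x y s t k) (hy2 : y * y ≠ 1) :
    (x :: (altList t s (2 * k) ++ [t * y])).IsChain (fun p q => ¬ Mergeable X p q) := by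
  obtain ⟨j, rfl⟩ : ∃ j, k = j + 1 := ⟨k - 1, by have := h.one_le; omega⟩
  have hxy : ∀ {p q}, p ∈ zpowers x → q ∈ zpowers y → p ≠ 1 → q ≠ 1 →
      ¬ Mergeable X p q :=
    h.stronglyMarked.not_mergeable h.mem_left h.mem_right h.ne
  have hyx : ∀ {p q}, p ∈ zpowers y → q ∈ zpowers x → p ≠ 1 → q ≠ 1 →
      ¬ Mergeable X p q :=
    h.stronglyMarked.not_mergeable h.mem_right h.mem_left h.ne.symm
  rw [show 2 * (j + 1) = 2 * j + 2 by ring]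
  exact isChain_cons_altList_append
    (hxy (mem_zpowers x) h.mem_zpowers_right (ne_of_mem_of_not_mem h.mem_left h.one_not_mem)
      h.right_ne_one)
    (hyx h.mem_zpowers_right h.mem_zpowers_left h.right_ne_one h.left_ne_one)
    (hxy h.mem_zpowers_left h.mem_zpowers_right h.left_ne_one h.right_ne_one)
    (hxy h.mem_zpowers_left (mul_mem h.mem_zpowers_right (mem_zpowers y)) h.left_ne_one
      (h.mul_right_ne_one hy2)) j

theorem mul_self_eq_one_or (h : OddBraid X x y s t k) : x * x = 1 ∨ y * y = 1 := by
  by_contra! hne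
  obtain ⟨hx2, hy2⟩ := hne
  have hk := h.one_le
  have hnred : ¬ Reduced X (x :: (altList t s (2 * k) ++ [t * y])) := by
    intro hred
    have := hred.2
    rw [h.prod_cons_altList_append_mul, h.sylLen_mul_mul hx2 hy2] at this
    simp at this
  obtain ⟨W', hI | hII⟩ :=
    h.propertyD.exists_mOp (h.sylWord_cons_altList_append_mul hy2) hnred
  · exact hI.not_isChain (h.isChain_not_mergeable hy2)
  obtain ⟨i, n, p, q, hn, hlen, hpq, hblock⟩ := hII.exists_block
  rcases braid_block_cons_altList (by omega) hn hpq hblock with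
    ⟨-, hxs | hxt⟩ | ⟨hnk, hst⟩ | hend
  · exact hx2 (hxs ▸ h.mul_self_eq_one)
  · exact h.mul_comm_ne_left hx2 hxt
  · exact h.altProd_ne_altProd (by omega) (by omega) hst
  simp only [List.length_cons, List.length_append, length_altList, List.length_nil] at hlen
  rcases braid_block_cons_altList_end (by omega) (even_two_mul k) hn (by omega) hpq hblock
    with hvt | hsv
  · exact ne_of_mem_of_not_mem h.mem_right h.one_not_mem (mul_eq_left.1 hvt)
  · exact h.mul_comm_ne_right hy2 hsv

end OddBraid

theorem orderOf_eq_two_of_mul_self {x : G} (hx : x * x = 1) {a : ℤ} (ha : x ^ a ≠ 1) :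
    orderOf x = 2 ∧ a ≡ 1 [ZMOD 2] := by
  have hx1 : x ≠ 1 := by rintro rfl; exact ha (one_zpow a)
  have ho : orderOf x = 2 := orderOf_eq_prime (by rwa [pow_two]) hx1
  refine ⟨ho, ?_⟩
  rw [← zpow_mod_orderOf, ho] at ha
  rcases Int.emod_two_eq_zero_or_one a with h0 | h1
  · exact absurd (by simp [h0]) ha
  · exact h1

theorem statement_3_general {G : Type*} [Group G] {X : Set G}
    (hSM : StronglyMarked X) (hPD : PropertyD X)
    {x y : G} (hx : x ∈ X) (hy : y ∈ X) (hxy : x ≠ y)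
    {a b : ℤ} (ha : x ^ a ≠ 1) (hb : y ^ b ≠ 1)
    {m : ℕ} (hmodd : Odd m)
    (halt : altProd (x ^ a) (y ^ b) m = altProd (y ^ b) (x ^ a) m)
    (hlen : sylLen X (altProd (x ^ a) (y ^ b) m) = m) :
    (orderOf x = 2 ∧ a ≡ 1 [ZMOD (2 : ℤ)]) ∨ (orderOf y = 2 ∧ b ≡ 1 [ZMOD (2 : ℤ)]) := by
  obtain ⟨k, rfl⟩ := hmodd
  have h : OddBraid X x y (x ^ a) (y ^ b) k :=
    ⟨hSM, hPD, hx, hy, hxy, Subgroup.zpow_mem_zpowers x a, Subgroup.zpow_mem_zpowers y b, ha, hb,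
      halt, hlen⟩
  exact h.mul_self_eq_one_or.imp (orderOf_eq_two_of_mul_self · ha)
    (orderOf_eq_two_of_mul_self · hb)

theorem statement_3 {G : Type*} [Group G] {X : Set G}
    (hSM : StronglyMarked X) (hPD : PropertyD X)
    {x y : G} (hx : x ∈ X) (hy : y ∈ X) (hxy : x ≠ y)
    {a b : ℤ} (ha : x ^ a ≠ 1) (hb : y ^ b ≠ 1)
    {m : ℕ} (hm : 3 ≤ m) (hmodd : Odd m) (hnc : x * y ≠ y * x)
    (halt : altProd (x ^ a) (y ^ b) m = altProd (y ^ b) (x ^ a) m)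
    (hlen : sylLen X (altProd (x ^ a) (y ^ b) m) = m) :
    (orderOf x = 2 ∧ a ≡ 1 [ZMOD (2 : ℤ)]) ∨ (orderOf y = 2 ∧ b ≡ 1 [ZMOD (2 : ℤ)]) :=
  statement_3_general hSM hPD hx hy hxy ha hb hmodd halt hlen

end Paper
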